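/- Let $\lambda:\mathbb{N}\to\mathbb{R}$ be a nonnegative multiplicative function and let $g(n) = \lambda(n)|\mu(n)|$ (so $g$ is supported on squarefree numbers). Suppose there is a constant $A > 0$ such that $\sum_{p \leq x} \lambda(p)\log p \leq A x \sqrt{\log x}$ for all $x \geq 2$. Then there is a constant $C > 0$ such that for all $x \geq 2$, $\sum_{n \leq x} g(n) \leq C \frac{x}{\sqrt{\log x}} \sum_{n \leq x} \frac{g(n)}{n}$. -/

import Mathlib

open scoped Classical ArithmeticFunction ArithmeticFunction.Moebius

open Finset Real

/-! Split `log x = log n + log (x / n)`. Since `log t ≤ t`, the second part contributes at most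
`x ∑ g n / n`. For squarefree `n`, multiplicativity gives
`g n log n = ∑_{p ∣ n} λ p g (n / p) log p`; writing `n = m p` and summing over the primes
`p ≤ x / m` first, the hypothesis bounds the first part by `A x √(log x) ∑ g m / m`.
Dividing by `log x = √(log x) ^ 2 ≥ √(log x) / 2` gives `C = A + 2`. -/

theorem Squarefree.log_eq_sum_log_primeFactors {n : ℕ} (hn : Squarefree n) :
    log n = ∑ p ∈ n.primeFactors, log p := by
  conv_lhs => rw [← Nat.prod_primeFactors_of_squarefree hn]
  push_cast
  exact log_prod fun p hp => by exact_mod_cast (Nat.prime_of_mem_primeFactors hp).ne_zero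

theorem Squarefree.coprime_div_of_prime {n p : ℕ} (hn : Squarefree n) (hp : p.Prime)
    (hpn : p ∣ n) : p.Coprime (n / p) := by
  refine (hp.coprime_iff_not_dvd).2 fun hdvd => hp.not_isUnit (hn p ?_)
  exact Nat.mul_dvd_of_dvd_div hpn hdvd

section MoebiusSupported

variable {lam g : ℕ → ℝ}

theorem apply_eq_ite_squarefree (hg : ∀ n, g n = lam n * |(μ n : ℝ)|) (n : ℕ) :
    g n = if Squarefree n then lam n else 0 := by
  rw [hg, ← Int.cast_abs, ArithmeticFunction.abs_moebius]
  split_ifs <;> simp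

theorem nonneg_of_eq_mul_abs_moebius (hg : ∀ n, g n = lam n * |(μ n : ℝ)|)
    (hnn : ∀ n, 0 ≤ lam n) (n : ℕ) : 0 ≤ g n :=
  hg n ▸ mul_nonneg (hnn n) (abs_nonneg _)

theorem mul_log_le_sum_primeFactors (hg : ∀ n, g n = lam n * |(μ n : ℝ)|)
    (hnn : ∀ n, 0 ≤ lam n)
    (hlm : ∀ m n : ℕ, Nat.Coprime m n → lam (m * n) = lam m * lam n) (n : ℕ) :
    g n * log n ≤ ∑ p ∈ n.primeFactors, lam p * g (n / p) * log p := by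
  by_cases hn : Squarefree n
  · refine le_of_eq ?_
    rw [hn.log_eq_sum_log_primeFactors, mul_sum]
    refine sum_congr rfl fun p hp => ?_
    have hp' := Nat.prime_of_mem_primeFactors hp
    have hpn := Nat.dvd_of_mem_primeFactors hp
    have hnp : Squarefree (n / p) := hn.squarefree_of_dvd (Nat.div_dvd_of_dvd hpn)
    rw [apply_eq_ite_squarefree hg, apply_eq_ite_squarefree hg, if_pos hn, if_pos hnp,
      ← hlm _ _ (hn.coprime_div_of_prime hp' hpn), Nat.mul_div_cancel' hpn]
  · rw [apply_eq_ite_squarefree hg, if_neg hn, zero_mul]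
    refine sum_nonneg fun p hp => mul_nonneg (mul_nonneg (hnn p)
      (nonneg_of_eq_mul_abs_moebius hg hnn _)) (log_natCast_nonneg p)

end MoebiusSupported

theorem sum_Icc_sum_primeFactors_eq {M : Type*} [AddCommMonoid M] (f : ℕ → ℕ → M) (N : ℕ) :
    ∑ n ∈ Icc 1 N, ∑ p ∈ n.primeFactors, f p (n / p) =
      ∑ m ∈ Icc 1 N, ∑ p ∈ (Icc 1 (N / m)).filter Nat.Prime, f p m := by
  rw [sum_sigma', sum_sigma']
  refine sum_nbij' (fun x => ⟨x.1 / x.2, x.2⟩) (fun x => ⟨x.1 * x.2, x.2⟩) ?_ ?_ ?_ ?_ ?_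
  · rintro ⟨n, p⟩ h
    simp only [mem_sigma, mem_Icc, mem_filter, Nat.mem_primeFactors] at h ⊢
    obtain ⟨⟨hn1, hnN⟩, hp, hpn, -⟩ := h
    have hm1 : 1 ≤ n / p := Nat.div_pos (Nat.le_of_dvd hn1 hpn) hp.pos
    refine ⟨⟨hm1, (Nat.div_le_self n p).trans hnN⟩, ⟨hp.one_lt.le, ?_⟩, hp⟩
    rw [Nat.le_div_iff_mul_le hm1, Nat.mul_div_cancel' hpn]
    exact hnN
  · rintro ⟨m, p⟩ h
    simp only [mem_sigma, mem_Icc, mem_filter, Nat.mem_primeFactors] at h ⊢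
    obtain ⟨⟨hm1, -⟩, ⟨-, hpm⟩, hp⟩ := h
    have hmp : m * p ≤ N := by rw [mul_comm]; exact (Nat.le_div_iff_mul_le hm1).1 hpm
    exact ⟨⟨Nat.mul_pos hm1 hp.pos, hmp⟩, hp, dvd_mul_left p m, (Nat.mul_pos hm1 hp.pos).ne'⟩
  · rintro ⟨n, p⟩ h
    simp only [mem_sigma, Nat.mem_primeFactors] at h
    simp [Nat.div_mul_cancel h.2.2.1]
  · rintro ⟨m, p⟩ h
    simp only [mem_sigma, mem_filter] at h
    simp [Nat.mul_div_cancel m h.2.2.pos]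
  · rintro ⟨n, p⟩ -
    rfl

theorem sum_mul_log_div_le {g : ℕ → ℝ} {s : Finset ℕ} (hg : ∀ n ∈ s, 0 ≤ g n) {x : ℝ}
    (hx : 0 ≤ x) : ∑ n ∈ s, g n * log (x / n) ≤ x * ∑ n ∈ s, g n / n := by
  rw [mul_sum]
  refine sum_le_sum fun n hn => ?_
  calc g n * log (x / n) ≤ g n * (x / n) :=
        mul_le_mul_of_nonneg_left (log_le_self (by positivity)) (hg n hn)
    _ = x * (g n / n) := by ring

section LogWeightedSum

variable {lam g : ℕ → ℝ} {x B : ℝ}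

theorem sum_mul_log_le_of_sum_primes_le (hg : ∀ n, 0 ≤ g n)
    (hkey : ∀ n, g n * log n ≤ ∑ p ∈ n.primeFactors, lam p * g (n / p) * log p)
    (hx : 0 < x)
    (hB : ∀ y, 1 ≤ y → y ≤ x → ∑ p ∈ (Icc 1 ⌊y⌋₊).filter Nat.Prime, lam p * log p ≤ B * y) :
    ∑ n ∈ Icc 1 ⌊x⌋₊, g n * log n ≤ B * x * ∑ n ∈ Icc 1 ⌊x⌋₊, g n / n := by
  calc ∑ n ∈ Icc 1 ⌊x⌋₊, g n * log n
      ≤ ∑ n ∈ Icc 1 ⌊x⌋₊, ∑ p ∈ n.primeFactors, lam p * g (n / p) * log p :=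
        sum_le_sum fun n _ => hkey n
    _ = ∑ m ∈ Icc 1 ⌊x⌋₊, g m * ∑ p ∈ (Icc 1 ⌊x / m⌋₊).filter Nat.Prime, lam p * log p := by
        simp only [sum_Icc_sum_primeFactors_eq (fun p m => lam p * g m * log p), mul_sum,
          Nat.floor_div_natCast]
        exact sum_congr rfl fun _ _ => sum_congr rfl fun _ _ => by ring
    _ ≤ ∑ m ∈ Icc 1 ⌊x⌋₊, g m * (B * (x / m)) := by
        refine sum_le_sum fun m hm => mul_le_mul_of_nonneg_left (hB _ ?_ ?_) (hg m)
        · rw [mem_Icc] at hm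
          rw [one_le_div (by exact_mod_cast hm.1)]
          exact (Nat.cast_le.2 hm.2).trans (Nat.floor_le hx.le)
        · exact div_le_self hx.le (by exact_mod_cast (mem_Icc.1 hm).1)
    _ = B * x * ∑ n ∈ Icc 1 ⌊x⌋₊, g n / n := by
        rw [mul_sum]
        exact sum_congr rfl fun _ _ => by ring

theorem sum_mul_log_le_mul_sum_div (hg : ∀ n, 0 ≤ g n)
    (hkey : ∀ n, g n * log n ≤ ∑ p ∈ n.primeFactors, lam p * g (n / p) * log p)
    (hx : 0 < x)
    (hB : ∀ y, 1 ≤ y → y ≤ x → ∑ p ∈ (Icc 1 ⌊y⌋₊).filter Nat.Prime, lam p * log p ≤ B * y) :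
    (∑ n ∈ Icc 1 ⌊x⌋₊, g n) * log x ≤ (B + 1) * x * ∑ n ∈ Icc 1 ⌊x⌋₊, g n / n := by
  have hsplit : ∀ n ∈ Icc 1 ⌊x⌋₊, g n * log x = g n * log n + g n * log (x / n) := by
    intro n hn
    rw [log_div hx.ne' (by have := (mem_Icc.1 hn).1; positivity)]
    ring
  rw [sum_mul, sum_congr rfl hsplit, sum_add_distrib, add_mul, one_mul, add_mul]
  exact add_le_add (sum_mul_log_le_of_sum_primes_le hg hkey hx hB)
    (sum_mul_log_div_le (fun n _ => hg n) hx.le)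

end LogWeightedSum

theorem one_half_le_sqrt_log {x : ℝ} (hx : 2 ≤ x) : 1 / 2 ≤ √(log x) := by
  rw [show (1 / 2 : ℝ) = √((1 / 2) ^ 2) from (sqrt_sq (by norm_num)).symm]
  exact sqrt_le_sqrt (by linarith [log_two_gt_d9, log_le_log two_pos hx])

theorem filter_prime_Icc_floor_eq_empty {y : ℝ} (hy : y < 2) :
    (Icc 1 ⌊y⌋₊).filter Nat.Prime = ∅ := by
  refine filter_eq_empty_iff.2 fun p hp hpp => ?_
  have hp2 : p < 2 :=
    (mem_Icc.1 hp).2.trans_lt ((Nat.floor_lt' two_ne_zero).2 (by exact_mod_cast hy))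
  exact hp2.not_ge hpp.two_le

theorem sum_prime_mul_log_le_mul_sqrt_log {lam : ℕ → ℝ} {A x : ℝ} (hA : 0 ≤ A)
    (hyp : ∀ x : ℝ, 2 ≤ x →
      ∑ p ∈ (Icc 1 ⌊x⌋₊).filter Nat.Prime, lam p * log p ≤ A * x * √(log x))
    {y : ℝ} (hy : 1 ≤ y) (hyx : y ≤ x) :
    ∑ p ∈ (Icc 1 ⌊y⌋₊).filter Nat.Prime, lam p * log p ≤ A * √(log x) * y := by
  rcases lt_or_ge y 2 with hy2 | hy2
  · rw [filter_prime_Icc_floor_eq_empty hy2, sum_empty]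
    positivity
  · calc _ ≤ A * y * √(log y) := hyp y hy2
      _ ≤ A * y * √(log x) := by gcongr
      _ = A * √(log x) * y := by ring

theorem stmt_16_general (lam : ℕ → ℝ) (hnn : ∀ n, 0 ≤ lam n)
    (hlm : ∀ m n : ℕ, Nat.Coprime m n → lam (m * n) = lam m * lam n)
    (g : ℕ → ℝ) (hg : ∀ n, g n = lam n * |(μ n : ℝ)|)
    (A : ℝ) (hA : 0 < A)
    (hyp : ∀ x : ℝ, 2 ≤ x →
      ∑ p ∈ (Finset.Icc 1 ⌊x⌋₊).filter Nat.Prime, lam p * Real.log p ≤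
        A * x * Real.sqrt (Real.log x)) :
    ∃ C > 0, ∀ x : ℝ, 2 ≤ x →
      ∑ n ∈ Finset.Icc 1 ⌊x⌋₊, g n ≤
        C * (x / Real.sqrt (Real.log x)) * ∑ n ∈ Finset.Icc 1 ⌊x⌋₊, g n / n := by
  refine ⟨A + 2, by linarith, fun x hx => ?_⟩
  have hg0 := nonneg_of_eq_mul_abs_moebius hg hnn
  have hS := sum_mul_log_le_mul_sum_div hg0 (mul_log_le_sum_primeFactors hg hnn hlm)
    (by linarith) fun y => sum_prime_mul_log_le_mul_sqrt_log hA.le hyp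
  have hT : 0 ≤ ∑ n ∈ Icc 1 ⌊x⌋₊, g n / n :=
    sum_nonneg fun n _ => div_nonneg (hg0 n) n.cast_nonneg
  have hs := one_half_le_sqrt_log hx
  have hsq := sq_sqrt (log_nonneg (by linarith : (1 : ℝ) ≤ x))
  set s := √(log x)
  rw [← hsq] at hS
  rw [mul_div_assoc', div_mul_eq_mul_div, le_div_iff₀ (by linarith)]
  -- `S s ^ 2 ≤ (A s + 1) x T ≤ s (A + 2) x T`, as `1 ≤ 2 s`
  nlinarith [mul_nonneg (by linarith : (0 : ℝ) ≤ x) hT]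

theorem stmt_16 (lam : ℕ → ℝ) (hnn : ∀ n, 0 ≤ lam n) (hl1 : lam 1 = 1)
    (hlm : ∀ m n : ℕ, Nat.Coprime m n → lam (m * n) = lam m * lam n)
    (g : ℕ → ℝ) (hg : ∀ n, g n = lam n * |(μ n : ℝ)|)
    (A : ℝ) (hA : 0 < A)
    (hyp : ∀ x : ℝ, 2 ≤ x →
      ∑ p ∈ (Finset.Icc 1 ⌊x⌋₊).filter Nat.Prime, lam p * Real.log p ≤
        A * x * Real.sqrt (Real.log x)) :
    ∃ C > 0, ∀ x : ℝ, 2 ≤ x →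
      ∑ n ∈ Finset.Icc 1 ⌊x⌋₊, g n ≤
        C * (x / Real.sqrt (Real.log x)) * ∑ n ∈ Finset.Icc 1 ⌊x⌋₊, g n / n :=
  stmt_16_general lam hnn hlm g hg A hA hyp
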